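/- (Core of the Optimality of Channel-Adaptive Credibility Allocation) Let W ≥ 2, let g : ℝ → ℝ be convex, differentiable and strictly decreasing on [0, W·C] for some budget parameter C > 0, and let reception weights w_1, …, w_W ∈ (0, 1] satisfy w_i ≠ w_j for some indices i, j. Then there exists a channel-adaptive allocation c_1, …, c_W ≥ 0 with Σ_{t=1}^W c_t = W·C such that Σ_{t=1}^W w_t g(c_t) < Σ_{t=1}^W w_t g(C); i.e., some non-uniform allocation of the credibility budget strictly outperforms the static (uniform) allocation c_t ≡ C. -/

import Mathlib

/-!
Shift a small amount `ε` of budget from a slot `i` of lower weight to a slot `j` of higher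
weight. The change of the weighted utility is `w i (g (C - ε) - g C) + w j (g (C + ε) - g C)`,
whose derivative in `ε` at `0` is `(w j - w i) g'(C)`. Convexity gives
`g'(C) ≤ slope g C (W C) < 0`, so this derivative is negative and a small enough shift
strictly lowers the utility.
-/

open Filter Set Topology

lemma HasDerivAt.eventually_lt_of_neg {f : ℝ → ℝ} {f' x : ℝ} (hf : HasDerivAt f f' x)
    (hf' : f' < 0) : ∀ᶠ t in 𝓝[>] 0, f (x + t) < f x := by
  filter_upwards [hf.tendsto_slope_zero_right.eventually (gt_mem_nhds hf'),
    self_mem_nhdsWithin] with t hslope (ht : 0 < t)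
  rw [smul_eq_mul] at hslope
  exact sub_neg.1 (neg_of_mul_neg_right hslope (inv_nonneg.2 ht.le))

lemma ConvexOn.deriv_neg_of_lt {S : Set ℝ} {g : ℝ → ℝ} {x y : ℝ} (hg : ConvexOn ℝ S g)
    (hx : x ∈ S) (hy : y ∈ S) (hxy : x < y) (hgxy : g y < g x)
    (hd : DifferentiableAt ℝ g x) : deriv g x < 0 :=
  (hg.deriv_le_slope hx hy hxy hd).trans_lt <| by
    rw [slope_def_field]
    exact div_neg_of_neg_of_pos (sub_neg.2 hgxy) (sub_pos.2 hxy)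

lemma hasDerivAt_mul_comp_sub_add_mul_comp_add {g : ℝ → ℝ} {d C : ℝ} (hg : HasDerivAt g d C)
    (a b : ℝ) : HasDerivAt (fun t ↦ a * g (C - t) + b * g (C + t)) ((b - a) * d) 0 := by
  have hsub := (HasDerivAt.comp_const_sub C 0 (by rwa [sub_zero])).const_mul a
  have hadd := (HasDerivAt.comp_const_add C 0 (by rwa [add_zero])).const_mul b
  exact (hsub.add hadd).congr_deriv (by ring)

def shiftBudget {ι : Type*} [DecidableEq ι] (C ε : ℝ) (i j : ι) (t : ι) : ℝ :=
  if t = i then C - ε else if t = j then C + ε else C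

section shiftBudget

variable {ι : Type*} [DecidableEq ι] {i j : ι}

lemma shiftBudget_nonneg {C ε : ℝ} (hε : 0 ≤ ε) (hεC : ε ≤ C) (t : ι) :
    0 ≤ shiftBudget C ε i j t := by
  unfold shiftBudget
  split_ifs <;> linarith

lemma sum_apply_shiftBudget_sub [Fintype ι] (hij : i ≠ j) (C ε : ℝ) (φ : ι → ℝ → ℝ) :
    ∑ t, φ t (shiftBudget C ε i j t) - ∑ t, φ t C
      = (φ i (C - ε) - φ i C) + (φ j (C + ε) - φ j C) := by
  rw [← Finset.sum_sub_distrib, Fintype.sum_eq_add i j hij]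
  · simp [shiftBudget, hij.symm]
  · rintro t ⟨hti, htj⟩
    simp [shiftBudget, hti, htj]

lemma sum_shiftBudget [Fintype ι] (hij : i ≠ j) (C ε : ℝ) :
    ∑ t, shiftBudget C ε i j t = Fintype.card ι * C := by
  have := sum_apply_shiftBudget_sub hij C ε fun _ x ↦ x
  simp only [Finset.sum_const, Finset.card_univ, nsmul_eq_mul] at this
  linarith

end shiftBudget

theorem adaptive_beats_static_allocation_general
    (W : ℕ) (hW : 2 ≤ W) (C : ℝ) (hC : 0 < C) (g : ℝ → ℝ)
    (hconv : ConvexOn ℝ (Set.Icc 0 ((W : ℝ) * C)) g)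
    (hdiff : DifferentiableOn ℝ g (Set.Icc 0 ((W : ℝ) * C)))
    (hanti : StrictAntiOn g (Set.Icc 0 ((W : ℝ) * C)))
    (w : Fin W → ℝ)
    (hne : ∃ i j, w i ≠ w j) :
    ∃ c : Fin W → ℝ, (∀ t, 0 ≤ c t) ∧ (∑ t, c t = (W : ℝ) * C) ∧
      (∑ t, w t * g (c t)) < ∑ t, w t * g C := by
  obtain ⟨i, j, hwij⟩ : ∃ i j, w i < w j := by
    obtain ⟨a, b, hab⟩ := hne
    exact hab.lt_or_gt.elim (fun h ↦ ⟨a, b, h⟩) fun h ↦ ⟨b, a, h⟩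
  have hij : i ≠ j := fun h ↦ hwij.ne (congrArg w h)
  have hCW : C < W * C := lt_mul_left hC (by exact_mod_cast hW)
  have hC_mem : C ∈ Icc 0 ((W : ℝ) * C) := ⟨hC.le, hCW.le⟩
  have hWC_mem : (W : ℝ) * C ∈ Icc 0 ((W : ℝ) * C) := ⟨hC.le.trans hCW.le, le_rfl⟩
  have hgC : DifferentiableAt ℝ g C := (hdiff C hC_mem).differentiableAt (Icc_mem_nhds hC hCW)
  have hderiv : deriv g C < 0 :=
    hconv.deriv_neg_of_lt hC_mem hWC_mem hCW (hanti hC_mem hWC_mem hCW) hgC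
  have hφ := hasDerivAt_mul_comp_sub_add_mul_comp_add hgC.hasDerivAt (w i) (w j)
  have hsmall : ∀ᶠ ε in 𝓝[>] 0, ε < C :=
    eventually_nhdsWithin_of_eventually_nhds (eventually_lt_nhds hC)
  obtain ⟨ε, hgain, hεC, hεpos⟩ :=
    ((hφ.eventually_lt_of_neg (mul_neg_of_pos_of_neg (sub_pos.2 hwij) hderiv)).and
      (hsmall.and self_mem_nhdsWithin)).exists
  simp only [zero_add, sub_zero, add_zero] at hgain
  refine ⟨shiftBudget C ε i j, shiftBudget_nonneg hεpos.le hεC.le, ?_, ?_⟩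
  · simpa using sum_shiftBudget hij C ε
  · have := sum_apply_shiftBudget_sub hij C ε fun t x ↦ w t * g x
    linarith

/-- Core of the Optimality of Channel-Adaptive Credibility Allocation:
for `W ≥ 2` slots, a convex, differentiable, strictly decreasing utility-of-deception
function `g` on `[0, W·C]` with budget `C > 0`, and reception weights `w_t ∈ (0,1]` that
are not all equal, some non-uniform allocation `c` of the total budget `W·C` strictly
outperforms the static allocation `c_t ≡ C`. -/
theorem adaptive_beats_static_allocation
    (W : ℕ) (hW : 2 ≤ W) (C : ℝ) (hC : 0 < C) (g : ℝ → ℝ)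
    (hconv : ConvexOn ℝ (Set.Icc 0 ((W : ℝ) * C)) g)
    (hdiff : DifferentiableOn ℝ g (Set.Icc 0 ((W : ℝ) * C)))
    (hanti : StrictAntiOn g (Set.Icc 0 ((W : ℝ) * C)))
    (w : Fin W → ℝ) (hw : ∀ t, 0 < w t ∧ w t ≤ 1)
    (hne : ∃ i j, w i ≠ w j) :
    ∃ c : Fin W → ℝ, (∀ t, 0 ≤ c t) ∧ (∑ t, c t = (W : ℝ) * C) ∧
      (∑ t, w t * g (c t)) < ∑ t, w t * g C :=
  adaptive_beats_static_allocation_general W hW C hC g hconv hdiff hanti w hne
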